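/- arXiv:2202.11432 — 3 statements merged into one kernel-verified Lean document; each statement's English description precedes it below -/
import Mathlib

section
/- Dyson's identity: for bounded linear operators L on a Banach space and a projection-type bounded operator decomposition L = PL + QL, one has exp(tL) = exp(tQL) + ∫₀ᵗ exp((t−τ)L) ∘ (PL) ∘ exp(τQL) dτ for all t ≥ 0. -/
open NormedSpace

/-! Duhamel's formula: `F τ = exp ((t - τ) • a) * exp (τ • b)` interpolates between `exp (t • a)` at
`τ = 0` and `exp (t • b)` at `τ = t`, and its derivative is `-exp ((t - τ) • a) * (a - b) * exp (τ • b)`,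
so the fundamental theorem of calculus gives the identity. Dyson's identity is the case `a = L`,
`b = Q L`, where `a - b = P L` because `P + Q = 1`. -/

section Duhamel

variable {𝔸 : Type*} [NormedRing 𝔸] [NormedAlgebra ℝ 𝔸] [CompleteSpace 𝔸]

theorem hasDerivAt_exp_sub_smul_mul_exp_smul (a b : 𝔸) (t τ : ℝ) :
    HasDerivAt (fun s : ℝ => exp ((t - s) • a) * exp (s • b))
      (-(exp ((t - τ) • a) * (a - b) * exp (τ • b))) τ := by
  have hleft : HasDerivAt (fun s : ℝ => exp ((t - s) • a))
      ((-1 : ℝ) • (exp ((t - τ) • a) * a)) τ :=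
    (hasDerivAt_exp_smul_const a (t - τ)).scomp τ ((hasDerivAt_id τ).const_sub t)
  refine (hleft.mul (hasDerivAt_exp_smul_const' b τ)).congr_deriv ?_
  rw [neg_one_smul]
  noncomm_ring

theorem continuous_exp_sub_smul_mul_mul_exp_smul (a b c : 𝔸) (t : ℝ) :
    Continuous fun τ : ℝ => exp ((t - τ) • a) * c * exp (τ • b) := by
  have hexp (x : 𝔸) : Continuous fun s : ℝ => exp (s • x) :=
    (differentiable_exp_smul_const ℝ x).continuous
  exact ((hexp a).comp (continuous_sub_left t)).mul continuous_const |>.mul (hexp b)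

theorem exp_smul_eq_exp_smul_add_integral (a b : 𝔸) (t : ℝ) :
    exp (t • a) = exp (t • b) + ∫ τ in (0:ℝ)..t, exp ((t - τ) • a) * (a - b) * exp (τ • b) := by
  have hFTC := intervalIntegral.integral_eq_sub_of_hasDerivAt
    (fun τ _ => hasDerivAt_exp_sub_smul_mul_exp_smul a b t τ)
    ((continuous_exp_sub_smul_mul_mul_exp_smul a b (a - b) t).neg.intervalIntegrable 0 t)
  simp only [intervalIntegral.integral_neg, sub_self, zero_smul, sub_zero, exp_zero, mul_one,
    one_mul, neg_eq_iff_eq_neg] at hFTC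
  rw [hFTC]
  abel

end Duhamel

/-- Dyson's identity: for bounded operators `L, P, Q` on a Banach space with `P + Q = I`,
`exp (tL) = exp (tQL) + ∫₀ᵗ exp ((t−τ)L) (PL) exp (τQL) dτ` for all `t ≥ 0`. -/
theorem dyson_identity {X : Type*} [NormedAddCommGroup X] [NormedSpace ℝ X]
    [CompleteSpace X] (L P Q : X →L[ℝ] X) (hPQ : P + Q = 1) :
    ∀ t : ℝ, 0 ≤ t →
      exp (t • L) =
        exp (t • (Q * L)) +
          ∫ τ in (0:ℝ)..t, exp ((t - τ) • L) * (P * L) * exp (τ • (Q * L)) := by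
  intro t _
  have hPL : P * L = L - Q * L := by rw [eq_sub_iff_add_eq, ← add_mul, hPQ, one_mul]
  rw [hPL]
  exact exp_smul_eq_exp_smul_add_integral L (Q * L) t
end

section
/- With M(Λ) = I − Δτ·Λ·(I + (Δτ/2)Λ)⁻¹ and Λ, I + (Δτ/2)Λ invertible and Δτ ≠ 0, one has M(Λ) − I invertible and the combined identity Mⁿ(Λ) + I + 2·Σ_{k=1}^{n−1} Mᵏ(Λ) = −(2/Δτ)·(Mⁿ(Λ) − I)·Λ⁻¹ for all n ≥ 1. -/
/-- With `M(Λ) = I − Δτ·Λ·(I + (Δτ/2)Λ)⁻¹`, `Λ` and `I + (Δτ/2)Λ` invertible, `Δτ ≠ 0`,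
the matrix `M(Λ) − I` is invertible and for all `n ≥ 1`,
`Mⁿ(Λ) + I + 2·Σ_{k=1}^{n−1} Mᵏ(Λ) = −(2/Δτ)·(Mⁿ(Λ) − I)·Λ⁻¹`. -/
theorem memory_matrix_combined {d : ℕ} (Λ : Matrix (Fin d) (Fin d) ℝ) (Δτ : ℝ)
    (hΔτ : Δτ ≠ 0) (hΛ : IsUnit Λ) (h2 : IsUnit (1 + (Δτ / 2) • Λ))
    (M : Matrix (Fin d) (Fin d) ℝ)
    (hM : M = 1 - Δτ • (Λ * (1 + (Δτ / 2) • Λ)⁻¹)) :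
    IsUnit (M - 1) ∧
      ∀ n : ℕ, 1 ≤ n →
        M ^ n + 1 + 2 • ∑ k ∈ Finset.Ico 1 n, M ^ k =
          (-(2 / Δτ)) • ((M ^ n - 1) * Λ⁻¹) := by
  set B := 1 + (Δτ / 2) • Λ with hB
  have hcomm : Λ * B = B * Λ := by
    simp [hB, mul_add, add_mul, mul_smul_comm, smul_mul_assoc]
  have hBB : B * B⁻¹ = 1 := Matrix.mul_nonsing_inv B (Matrix.isUnit_iff_isUnit_det B |>.mp h2)
  have hBB' : B⁻¹ * B = 1 := Matrix.nonsing_inv_mul B (Matrix.isUnit_iff_isUnit_det B |>.mp h2)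
  have hΛΛ : Λ * Λ⁻¹ = 1 := Matrix.mul_nonsing_inv Λ (Matrix.isUnit_iff_isUnit_det Λ |>.mp hΛ)
  have hcommi : Λ * B⁻¹ = B⁻¹ * Λ := by
    calc Λ * B⁻¹ = B⁻¹ * (B * (Λ * B⁻¹)) := by rw [← mul_assoc, hBB', one_mul]
    _ = B⁻¹ * Λ := by rw [show B * (Λ * B⁻¹) = Λ from by
          rw [← mul_assoc, ← hcomm, mul_assoc, hBB, mul_one]]
  have hM1 : M - 1 = (-Δτ) • (Λ * B⁻¹) := by
    rw [hM]; module
  have hUnit : IsUnit (M - 1) := by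
    rw [hM1]
    have hu : IsUnit (Λ * B⁻¹) := hΛ.mul ((Matrix.isUnit_nonsing_inv_iff).mpr h2)
    exact (IsUnit.smul (Units.mk0 (-Δτ) (neg_ne_zero.mpr hΔτ)) hu)
  have expand : B * (M + 1) = (2:ℝ) • B - Δτ • (B * Λ * B⁻¹) := by
    rw [hM, mul_add, mul_sub, mul_one, Matrix.mul_smul, ← mul_assoc]
    module
  have key : B * (M + 1) = (2:ℝ) • (1 : Matrix (Fin d) (Fin d) ℝ) := by
    rw [expand, ← hcomm, mul_assoc, hBB, mul_one, hB]
    module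
  have hMp1 : M + 1 = (2:ℝ) • B⁻¹ := by
    calc M + 1 = B⁻¹ * (B * (M + 1)) := by rw [← mul_assoc, hBB', one_mul]
    _ = B⁻¹ * ((2:ℝ) • (1 : Matrix (Fin d) (Fin d) ℝ)) := by rw [key]
    _ = (2:ℝ) • B⁻¹ := by rw [mul_smul_comm, mul_one]
  refine ⟨hUnit, fun n hn => ?_⟩
  set S := ∑ k ∈ Finset.range n, M ^ k with hS
  have hgeom : S * (M - 1) = M ^ n - 1 := geom_sum_mul M n
  have hSM : S * M = M ^ n - 1 + S := by
    rw [← hgeom, mul_sub, mul_one]; abel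
  have hIco : ∑ k ∈ Finset.Ico 1 n, M ^ k = S - 1 := by
    rw [hS, Finset.range_eq_Ico, ← Finset.sum_Ico_consecutive _ (Nat.zero_le 1) hn]
    simp
  have hLHS : M ^ n + 1 + 2 • ∑ k ∈ Finset.Ico 1 n, M ^ k = S * (M + 1) := by
    rw [hIco, mul_add, mul_one, hSM]; abel
  have hRHS : (M ^ n - 1) * Λ⁻¹ = (-Δτ) • (S * B⁻¹) := by
    rw [← hgeom, hM1, mul_assoc, Matrix.smul_mul, Matrix.mul_smul]
    congr 1
    rw [hcommi, mul_assoc B⁻¹, hΛΛ, mul_one]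
  rw [hLHS, hRHS, hMp1, mul_smul_comm, smul_smul,
    show (-(2/Δτ)) * (-Δτ) = 2 by field_simp]
end

section
/- Suppose the sequence M̂ₙ of vectors satisfies the discretized memory equation M̂ₙ = (I + (Δτ/2)Λ)⁻¹ · (e^{nΔτΛ}(I − (Δτ/2)Λ)M̂₀ − ΔτΛ·Σ_{k=1}^{n−1} e^{(n−k)ΔτΛ} M̂ₖ) for all n ≥ 1, where Λ is a diagonal matrix and I ± (Δτ/2)Λ are invertible. Then M̂ₙ satisfies the recurrence M̂ₙ = e^{ΔτΛ}·M(Λ)·M̂ₙ₋₁ for all n ≥ 1, where M(Λ) = I − ΔτΛ(I + (Δτ/2)Λ)⁻¹. -/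
/-!
Put `A = I + (Δτ/2)Λ`, `L = ΔτΛ`, `E = e^{ΔτΛ}`, so that `I − (Δτ/2)Λ = A − L` and
`e^{jΔτΛ} = Eʲ`. Writing `(A − L)M̂₀ = AM̂₀ − LM̂₀` turns the initial term into the `k = 0` term
of the memory sum, so that `AM̂ₙ = EⁿAM̂₀ − L Σ_{k<n} Eⁿ⁻ᵏM̂ₖ` for all `n`. Since `E` commutes with `L`,
this convolution satisfies `AM̂ₙ₊₁ = E(AM̂ₙ − LM̂ₙ)`, and cancelling the commuting factor `A` gives
`M̂ₙ₊₁ = E(I − LA⁻¹)M̂ₙ`.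
-/

open NormedSpace Matrix

open Finset

namespace Matrix

variable {m α : Type*} [Fintype m] [DecidableEq m] [CommRing α]

theorem mulVec_succ_eq_of_memory {A E L : Matrix m m α} (hEL : Commute E L) {M : ℕ → m → α}
    (hM : ∀ n, 1 ≤ n → A *ᵥ M n =
      E ^ n *ᵥ ((A - L) *ᵥ M 0) - L *ᵥ ∑ k ∈ Ico 1 n, E ^ (n - k) *ᵥ M k) (n : ℕ) :
    A *ᵥ M (n + 1) = (E * (A - L)) *ᵥ M n := by
  have hEnL : ∀ j : ℕ, E ^ j *ᵥ (L *ᵥ M 0) = L *ᵥ (E ^ j *ᵥ M 0) := fun j => by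
    rw [mulVec_mulVec, mulVec_mulVec, (hEL.pow_left j).eq]
  have hfull : ∀ n, A *ᵥ M n = E ^ n *ᵥ (A *ᵥ M 0) - L *ᵥ ∑ k ∈ range n, E ^ (n - k) *ᵥ M k := by
    rintro (_ | n)
    · simp
    · rw [hM _ n.succ_pos, sum_range_eq_add_Ico _ n.succ_pos, Nat.sub_zero, sub_mulVec,
        mulVec_sub, hEnL, mulVec_add]
      abel
  have hshift : ∑ k ∈ range n, E ^ (n + 1 - k) *ᵥ M k =
      E *ᵥ ∑ k ∈ range n, E ^ (n - k) *ᵥ M k := by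
    rw [mulVec_sum]
    refine sum_congr rfl fun k hk => ?_
    rw [Nat.sub_add_comm (mem_range.1 hk).le, pow_succ', mulVec_mulVec]
  have hEL_mulVec : ∀ v, E *ᵥ (L *ᵥ v) = L *ᵥ (E *ᵥ v) := fun v => by
    rw [mulVec_mulVec, mulVec_mulVec, hEL.eq]
  calc A *ᵥ M (n + 1)
      = E *ᵥ (E ^ n *ᵥ (A *ᵥ M 0) - L *ᵥ ∑ k ∈ range n, E ^ (n - k) *ᵥ M k) - E *ᵥ (L *ᵥ M n) := by
        rw [hfull, sum_range_succ, hshift, Nat.add_sub_cancel_left, pow_one, mulVec_add,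
          pow_succ', ← mulVec_mulVec, mulVec_sub, hEL_mulVec, hEL_mulVec]
        abel
    _ = (E * (A - L)) *ᵥ M n := by
        rw [← hfull, ← mulVec_sub, ← sub_mulVec, mulVec_mulVec]

theorem mul_mul_one_sub_mul_nonsing_inv {A E L : Matrix m m α} (hA : IsUnit A)
    (hAE : Commute A E) (hAL : Commute A L) : A * (E * (1 - L * A⁻¹)) = E * (A - L) := by
  rw [← mul_assoc, hAE.eq, mul_assoc, mul_sub, mul_one, ← mul_assoc A L, hAL.eq, mul_assoc,
    mul_nonsing_inv _ ((isUnit_iff_isUnit_det A).mp hA), mul_one]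

theorem exp_natCast_mul_smul {m 𝕂 : Type*} [Fintype m] [DecidableEq m] [RCLike 𝕂]
    (n : ℕ) (t : 𝕂) (Λ : Matrix m m 𝕂) : exp ((n * t) • Λ) = exp (t • Λ) ^ n := by
  rw [mul_smul, Nat.cast_smul_eq_nsmul, Matrix.exp_nsmul]

end Matrix

theorem memory_recurrence_general {d : ℕ} (Λ : Matrix (Fin d) (Fin d) ℂ)
    (Δτ : ℝ)
    (hp : IsUnit (1 + ((Δτ : ℂ) / 2) • Λ))
    (Mh : ℕ → (Fin d → ℂ))
    (heq : ∀ n : ℕ, 1 ≤ n →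
      Mh n = (1 + ((Δτ : ℂ) / 2) • Λ)⁻¹ *ᵥ
        (exp (((n : ℂ) * (Δτ : ℂ)) • Λ) *ᵥ ((1 - ((Δτ : ℂ) / 2) • Λ) *ᵥ Mh 0) -
          (Δτ : ℂ) • (Λ *ᵥ ∑ k ∈ Finset.Ico 1 n,
            exp ((((n : ℂ) - (k : ℂ)) * (Δτ : ℂ)) • Λ) *ᵥ Mh k))) :
    ∀ n : ℕ, 1 ≤ n →
      Mh n = (exp ((Δτ : ℂ) • Λ) *
        (1 - (Δτ : ℂ) • (Λ * (1 + ((Δτ : ℂ) / 2) • Λ)⁻¹))) *ᵥ Mh (n - 1) := by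
  set A := 1 + ((Δτ : ℂ) / 2) • Λ
  set L := (Δτ : ℂ) • Λ
  set E := exp L
  have hAL : Commute A L :=
    ((Commute.one_left Λ).add_left ((Commute.refl Λ).smul_left _)).smul_right _
  have hEL : Commute E L := (Commute.refl L).exp_left
  have hmem : ∀ n, 1 ≤ n → A *ᵥ Mh n =
      E ^ n *ᵥ ((A - L) *ᵥ Mh 0) - L *ᵥ ∑ k ∈ Ico 1 n, E ^ (n - k) *ᵥ Mh k := by
    intro n hn
    have hsub : 1 - ((Δτ : ℂ) / 2) • Λ = A - L := by
      simp only [A, L]; module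
    rw [heq n hn, mulVec_mulVec, mul_nonsing_inv _ ((isUnit_iff_isUnit_det A).mp hp), one_mulVec,
      exp_natCast_mul_smul, hsub, ← smul_mulVec]
    congr 2
    refine sum_congr rfl fun k hk => ?_
    rw [← Nat.cast_sub (mem_Ico.1 hk).2.le, exp_natCast_mul_smul]
  intro n hn
  obtain ⟨n, rfl⟩ := Nat.exists_eq_add_of_le' hn
  apply mulVec_injective_iff_isUnit.2 hp
  rw [mulVec_mulVec, ← smul_mul_assoc, mul_mul_one_sub_mul_nonsing_inv hp hAL.exp_right hAL,
    Nat.add_sub_cancel, mulVec_succ_eq_of_memory hEL hmem]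

/-- If the sequence `Mhₙ` satisfies the discretized memory equation
`Mhₙ = (I + (Δτ/2)Λ)⁻¹ (e^{nΔτΛ}(I − (Δτ/2)Λ)Mh₀ − ΔτΛ Σ_{k=1}^{n−1} e^{(n−k)ΔτΛ} Mhₖ)`
for all `n ≥ 1`, where `Λ` is diagonal and `I ± (Δτ/2)Λ` are invertible, then
`Mhₙ = e^{ΔτΛ} M(Λ) Mhₙ₋₁` for all `n ≥ 1`, where `M(Λ) = I − ΔτΛ(I + (Δτ/2)Λ)⁻¹`. -/
theorem memory_recurrence {d : ℕ} (Λ : Matrix (Fin d) (Fin d) ℂ) (hdiag : Λ.IsDiag)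
    (Δτ : ℝ) (hΔτ : 0 < Δτ)
    (hp : IsUnit (1 + ((Δτ : ℂ) / 2) • Λ)) (hm : IsUnit (1 - ((Δτ : ℂ) / 2) • Λ))
    (Mh : ℕ → (Fin d → ℂ))
    (heq : ∀ n : ℕ, 1 ≤ n →
      Mh n = (1 + ((Δτ : ℂ) / 2) • Λ)⁻¹ *ᵥ
        (exp (((n : ℂ) * (Δτ : ℂ)) • Λ) *ᵥ ((1 - ((Δτ : ℂ) / 2) • Λ) *ᵥ Mh 0) -
          (Δτ : ℂ) • (Λ *ᵥ ∑ k ∈ Finset.Ico 1 n,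
            exp ((((n : ℂ) - (k : ℂ)) * (Δτ : ℂ)) • Λ) *ᵥ Mh k))) :
    ∀ n : ℕ, 1 ≤ n →
      Mh n = (exp ((Δτ : ℂ) • Λ) *
        (1 - (Δτ : ℂ) • (Λ * (1 + ((Δτ : ℂ) / 2) • Λ)⁻¹))) *ᵥ Mh (n - 1) :=
  memory_recurrence_general Λ Δτ hp Mh heq
end
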